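/- arXiv:1802.04345 — 7 statements merged into one kernel-verified Lean document; each statement's English description precedes it below -/
import Mathlib

section
/- Let m ≥ 1 and let p : Fin (m+1) → ℝ^m be an affinely independent family of points. For any point x ∈ ℝ^m, x lies in the convex hull of {p_0, …, p_m} if and only if the sum over j of the volumes A(update p j x) of the sub-simplices obtained by replacing p_j with x equals the volume A(p) of the simplex, i.e., x ∈ convexHull ℝ (range p) ↔ ∑_{j=0}^{m} A(Function.update p j x) = A(p). -/
/-!
Since `p` is an affine basis, the affine map `y ↦ y + λ_j(y) • (x - p_j)`, where `λ_j` is the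
`j`-th barycentric coordinate, fixes `p_i` for `i ≠ j` and sends `p_j` to `x`. Its linear part is
a rank-one perturbation of the identity with determinant `1 + λ_j(x - p_j) = λ_j(x)`, so
`A(update p j x) = |λ_j(x)| A(p)`. As `A(p) > 0` and `∑ λ_j(x) = 1`, the test reads
`∑ |λ_j(x)| = ∑ λ_j(x)`, i.e. all barycentric coordinates of `x` are nonnegative.
-/

open MeasureTheory

/-- The `m`-dimensional volume of the convex hull of the range of a family of points
in `ℝ^m` (the "area" `A(p)` of the simplex with vertices `p`). -/
noncomputable def simVol {m : ℕ} (p : Fin (m + 1) → EuclideanSpace ℝ (Fin m)) : ℝ :=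
  (volume (convexHull ℝ (Set.range p))).toReal

theorem LinearMap.det_id_add_smulRight {K M : Type*} [Field K] [AddCommGroup M] [Module K M]
    [FiniteDimensional K M] (f : M →ₗ[K] K) (w : M) :
    LinearMap.det (LinearMap.id + f.smulRight w) = 1 + f w := by
  let e := Module.finBasis K M
  rw [← LinearMap.det_toMatrix e, map_add, LinearMap.toMatrix_id, LinearMap.toMatrix_smulRight,
    Matrix.vecMulVec_eq Unit, Matrix.det_one_add_replicateCol_mul_replicateRow]
  conv_rhs => rw [← e.sum_repr w]
  simp only [dotProduct, Function.comp_apply, map_sum, map_smul, smul_eq_mul, mul_comm]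

theorem MeasureTheory.Measure.addHaar_image_affineMap {E : Type*} [NormedAddCommGroup E]
    [NormedSpace ℝ E] [MeasurableSpace E] [BorelSpace E] [FiniteDimensional ℝ E] (μ : Measure E)
    [μ.IsAddHaarMeasure] (f : E →ᵃ[ℝ] E) (s : Set E) :
    μ (f '' s) = ENNReal.ofReal |LinearMap.det f.linear| * μ s := by
  have hf : ⇑f = (· + f 0) ∘ f.linear := funext fun y => congrFun f.decomp y
  rw [hf, Set.image_comp, Set.image_add_right, measure_preimage_add_right,
    addHaar_image_linearMap]

theorem Finset.sum_abs_eq_sum_iff {ι α : Type*} [AddCommGroup α] [LinearOrder α]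
    [IsOrderedAddMonoid α] {s : Finset ι} {f : ι → α} :
    ∑ i ∈ s, |f i| = ∑ i ∈ s, f i ↔ ∀ i ∈ s, 0 ≤ f i := by
  rw [eq_comm, Finset.sum_eq_sum_iff_of_le fun i _ => le_abs_self (f i)]
  simp only [eq_comm (a := f _), abs_eq_self]

namespace AffineBasis

section ReplaceVertex

variable {ι k V : Type*} [Field k] [AddCommGroup V] [Module k V] (b : AffineBasis ι k V)
  (j : ι) (x : V)

/-- The affine map `y ↦ y + b.coord j y • (x - b j)`. -/
noncomputable def replaceVertex : V →ᵃ[k] V :=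
  AffineMap.id k V + (AffineMap.lineMap 0 (x - b j)).comp (b.coord j)

theorem replaceVertex_comp [DecidableEq ι] :
    ⇑(b.replaceVertex j x) ∘ b = Function.update b j x := by
  funext i
  rcases eq_or_ne i j with rfl | hij
  · simp [replaceVertex, AffineMap.lineMap_apply_module']
  · simp [replaceVertex, hij, b.coord_apply_ne hij.symm]

theorem replaceVertex_linear :
    (b.replaceVertex j x).linear = LinearMap.id + (b.coord j).linear.smulRight (x - b j) := by
  ext v
  simp [replaceVertex]

theorem det_replaceVertex_linear [FiniteDimensional k V] :
    LinearMap.det (b.replaceVertex j x).linear = b.coord j x := by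
  rw [replaceVertex_linear, LinearMap.det_id_add_smulRight, ← vsub_eq_sub,
    AffineMap.linearMap_vsub, coord_apply_eq, vsub_eq_sub, add_sub_cancel]

end ReplaceVertex

section Volume

variable {ι E : Type*} [NormedAddCommGroup E] [NormedSpace ℝ E] [MeasurableSpace E]
  (μ : Measure E) (b : AffineBasis ι ℝ E)

theorem addHaar_convexHull_update [BorelSpace E] [FiniteDimensional ℝ E] [μ.IsAddHaarMeasure]
    [DecidableEq ι] (j : ι) (x : E) :
    μ (convexHull ℝ (Set.range (Function.update b j x))) =
      ENNReal.ofReal |b.coord j x| * μ (convexHull ℝ (Set.range b)) := by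
  rw [← b.replaceVertex_comp j x, Set.range_comp, ← AffineMap.image_convexHull,
    Measure.addHaar_image_affineMap, det_replaceVertex_linear]

theorem measure_convexHull_pos [Fintype ι] [μ.IsOpenPosMeasure] :
    0 < μ (convexHull ℝ (Set.range b)) :=
  Measure.measure_pos_of_nonempty_interior _ ⟨_, b.centroid_mem_interior_convexHull⟩

theorem measure_convexHull_lt_top [Finite ι] [IsFiniteMeasureOnCompacts μ] :
    μ (convexHull ℝ (Set.range b)) < ⊤ :=
  ((Set.finite_range b).isCompact_convexHull ℝ).measure_lt_top

end Volume

end AffineBasis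

theorem simVol_update {m : ℕ} (b : AffineBasis (Fin (m + 1)) ℝ (EuclideanSpace ℝ (Fin m)))
    (j : Fin (m + 1)) (x : EuclideanSpace ℝ (Fin m)) :
    simVol (Function.update b j x) = |b.coord j x| * simVol b := by
  rw [simVol, b.addHaar_convexHull_update volume, ENNReal.toReal_mul,
    ENNReal.toReal_ofReal (abs_nonneg _), simVol]

theorem simVol_pos {m : ℕ} (b : AffineBasis (Fin (m + 1)) ℝ (EuclideanSpace ℝ (Fin m))) :
    0 < simVol b :=
  ENNReal.toReal_pos (b.measure_convexHull_pos volume).ne' (b.measure_convexHull_lt_top volume).ne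

theorem convexHull_inclusion_test_general {m : ℕ}
    (p : Fin (m + 1) → EuclideanSpace ℝ (Fin m)) (hp : AffineIndependent ℝ p)
    (x : EuclideanSpace ℝ (Fin m)) :
    x ∈ convexHull ℝ (Set.range p) ↔
      ∑ j : Fin (m + 1), simVol (Function.update p j x) = simVol p := by
  have hspan : affineSpan ℝ (Set.range p) = ⊤ := by
    rw [hp.affineSpan_eq_top_iff_card_eq_finrank_add_one, Fintype.card_fin,
      finrank_euclideanSpace_fin]
  let b : AffineBasis (Fin (m + 1)) ℝ (EuclideanSpace ℝ (Fin m)) := ⟨p, hp, hspan⟩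
  change x ∈ convexHull ℝ (Set.range b) ↔ ∑ j, simVol (Function.update b j x) = simVol b
  have hsum : ∑ j, simVol (Function.update b j x) = (∑ j, |b.coord j x|) * simVol b := by
    simp only [simVol_update, Finset.sum_mul]
  rw [hsum, mul_eq_right₀ (simVol_pos b).ne', ← b.sum_coord_apply_eq_one x,
    Finset.sum_abs_eq_sum_iff, b.convexHull_eq_nonneg_coord]
  simp only [Set.mem_ofPred_eq, Finset.mem_univ, forall_const]

/-- Convex-hull inclusion test (Eq. (12)): `x` lies in the convex hull of the
affinely independent family `p` iff the sub-simplex volumes obtained by replacing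
each vertex with `x` sum to the volume of the simplex. -/
theorem convexHull_inclusion_test {m : ℕ} (hm : 1 ≤ m)
    (p : Fin (m + 1) → EuclideanSpace ℝ (Fin m)) (hp : AffineIndependent ℝ p)
    (x : EuclideanSpace ℝ (Fin m)) :
    x ∈ convexHull ℝ (Set.range p) ↔
      ∑ j : Fin (m + 1), simVol (Function.update p j x) = simVol p :=
  convexHull_inclusion_test_general p hp x
end

section
/- Let m ≥ 1, let p : Fin (m+1) → ℝ^m be affinely independent (hence it forms an affine basis of ℝ^m), and let b denote the associated affine basis with barycentric coordinate functions b.coord j. For every x in the convex hull of {p_0, …, p_m} and every j, the j-th barycentric coordinate equals the ratio of sub-simplex volume to simplex volume: (b.coord j) x · A(p) = A(Function.update p j x). -/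
open MeasureTheory

namespace AffineBasis

variable {ι k V P : Type*} [AddCommGroup V] [AddTorsor V P]

section Ring

variable [Ring k] [Module k V]

noncomputable def updateMap (b : AffineBasis ι k P) (j : ι) (x : P) : P →ᵃ[k] P where
  toFun y := b.coord j y • (x -ᵥ b j) +ᵥ y
  linear := LinearMap.transvection (b.coord j).linear (x -ᵥ b j)
  map_vadd' y v := by
    rw [LinearMap.transvection.apply, AffineMap.map_vadd, vadd_vadd, vadd_vadd, vadd_eq_add,
      add_smul]
    congr 1
    abel

theorem updateMap_apply (b : AffineBasis ι k P) (j : ι) (x y : P) :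
    b.updateMap j x y = b.coord j y • (x -ᵥ b j) +ᵥ y :=
  rfl

theorem updateMap_comp [DecidableEq ι] (b : AffineBasis ι k P) (j : ι) (x : P) :
    b.updateMap j x ∘ b = Function.update b j x := by
  funext i
  rcases eq_or_ne i j with rfl | hij
  · simp [updateMap_apply]
  · simp [updateMap_apply, b.coord_apply_ne hij.symm, hij]

end Ring

theorem det_updateMap_linear [CommRing k] [Module k V] [Module.Free k V] [Module.Finite k V]
    (b : AffineBasis ι k P) (j : ι) (x : P) :
    LinearMap.det (b.updateMap j x).linear = b.coord j x := by
  change LinearMap.det (LinearMap.transvection _ _) = _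
  rw [LinearMap.transvection.det, AffineMap.linearMap_vsub, coord_apply_eq, vsub_eq_sub,
    add_sub_cancel]

end AffineBasis

theorem AffineBasis.addHaar_convexHull_update_s3 {ι E : Type*} [DecidableEq ι]
    [NormedAddCommGroup E] [NormedSpace ℝ E] [MeasurableSpace E] [BorelSpace E]
    [FiniteDimensional ℝ E] (μ : Measure E) [μ.IsAddHaarMeasure] (b : AffineBasis ι ℝ E)
    (j : ι) (x : E) :
    μ (convexHull ℝ (Set.range (Function.update b j x))) =
      ENNReal.ofReal |b.coord j x| * μ (convexHull ℝ (Set.range b)) := by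
  rw [← b.updateMap_comp j x, Set.range_comp, ← AffineMap.image_convexHull,
    μ.addHaar_image_affineMap, b.det_updateMap_linear]

theorem barycentric_coord_eq_volume_ratio_general {m : ℕ}
    (p : Fin (m + 1) → EuclideanSpace ℝ (Fin m))
    (b : AffineBasis (Fin (m + 1)) ℝ (EuclideanSpace ℝ (Fin m))) (hb : ⇑b = p)
    (x : EuclideanSpace ℝ (Fin m)) (hx : x ∈ convexHull ℝ (Set.range p))
    (j : Fin (m + 1)) :
    b.coord j x * simVol p = simVol (Function.update p j x) := by
  subst hb
  have hcoord : 0 ≤ b.coord j x := by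
    rw [b.convexHull_eq_nonneg_coord] at hx
    exact hx j
  rw [simVol, simVol, b.addHaar_convexHull_update_s3 volume, ENNReal.toReal_mul,
    ENNReal.toReal_ofReal (abs_nonneg _), abs_of_nonneg hcoord]

/-- The volume-ratio weights of Eqs. (15)-(16) are exactly barycentric coordinates:
for an affine basis `b` of `ℝ^m` with points `p` and any `x` in the convex hull of the
basis points, the `j`-th barycentric coordinate of `x` times the simplex volume equals
the volume of the sub-simplex obtained by replacing `p j` with `x`. -/
theorem barycentric_coord_eq_volume_ratio {m : ℕ} (hm : 1 ≤ m)
    (p : Fin (m + 1) → EuclideanSpace ℝ (Fin m)) (hp : AffineIndependent ℝ p)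
    (b : AffineBasis (Fin (m + 1)) ℝ (EuclideanSpace ℝ (Fin m))) (hb : ⇑b = p)
    (x : EuclideanSpace ℝ (Fin m)) (hx : x ∈ convexHull ℝ (Set.range p))
    (j : Fin (m + 1)) :
    b.coord j x * simVol p = simVol (Function.update p j x) :=
  barycentric_coord_eq_volume_ratio_general p b hb x hx j
end

section
/- Let a, b, c be three points in ℝ². Let M be the 4×4 symmetric matrix whose (0,0) entry is 0, whose remaining first row and first column entries are all 1, and whose lower-right 3×3 block D has entries D_{lj} = d_{lj}² where d_{lj} is the Euclidean distance between the l-th and j-th of the points a, b, c (so D has zero diagonal). Then the determinant of M equals −16 times the square of the area of the triangle with vertices a, b, c: det M = −16 · A(a,b,c)², where A(a,b,c) is the 2-dimensional Lebesgue measure of the convex hull of {a, b, c}. -/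
/-!
Both sides are computed in coordinates. Expanding the determinant gives the polynomial
`x² + y² + z² - 2(xy + xz + yz)` in the squared side lengths, and substituting coordinates
turns it into `-4 D²`, where `D` is the cross product of `b - a` and `c - a`. On the other
side, the triangle is the image of the unit triangle `conv {0, e₀, e₁}` under `x ↦ a + L x`,
where the columns of `L` are `b - a` and `c - a`; so its area is `|det L| = |D|` times the
area `1/2` of the unit triangle, which is computed by Fubini.
-/

open MeasureTheory Set Pointwise

/-- The Cayley–Menger matrix of three points `a b c` in the plane: the `4 × 4`
symmetric matrix with `(0,0)` entry `0`, remaining first-row and first-column entries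
`1`, and lower-right `3 × 3` block the matrix of squared pairwise distances. -/
noncomputable def cayleyMenger (a b c : EuclideanSpace ℝ (Fin 2)) :
    Matrix (Fin 4) (Fin 4) ℝ :=
  Matrix.of (Fin.cons (Fin.cons 0 fun _ => 1)
    (fun i => Fin.cons 1 fun j => dist (![a, b, c] i) (![a, b, c] j) ^ 2))

local notation "ℝ²" => EuclideanSpace ℝ (Fin 2)

theorem volume_region_between_cc_eq_lintegral {α : Type*} [MeasurableSpace α] {μ : Measure α}
    {f g : α → ℝ} {s : Set α} (hf : Measurable f) (hg : Measurable g) (hs : MeasurableSet s) :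
    μ.prod volume {p : α × ℝ | p.1 ∈ s ∧ p.2 ∈ Icc (f p.1) (g p.1)} =
      ∫⁻ x in s, ENNReal.ofReal (g x - f x) ∂μ := by
  rw [Measure.prod_apply (measurableSet_region_between_cc hf hg hs), ← lintegral_indicator hs]
  congr 1 with x
  by_cases hx : x ∈ s
  · simp only [preimage, mem_ofPred_eq, hx, true_and, ofPred_mem_eq, indicator_of_mem]
    exact Real.volume_Icc
  · simp [hx, preimage]

theorem volume_stdTriangle :
    volume {p : ℝ × ℝ | p.1 ∈ Icc 0 1 ∧ p.2 ∈ Icc 0 (1 - p.1)} = ENNReal.ofReal (1 / 2) := by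
  rw [Measure.volume_eq_prod, volume_region_between_cc_eq_lintegral measurable_const
    (by fun_prop) measurableSet_Icc, ← ofReal_integral_eq_lintegral_ofReal]
  · rw [integral_Icc_eq_integral_Ioc, ← intervalIntegral.integral_of_le zero_le_one]
    simp only [sub_zero]
    rw [intervalIntegral.integral_sub intervalIntegrable_const
      intervalIntegral.intervalIntegrable_id]
    norm_num
  · exact (by fun_prop : Continuous fun x : ℝ => 1 - x - 0).integrableOn_Icc
  · filter_upwards [ae_restrict_mem measurableSet_Icc] with x hx
    simpa using hx.2

theorem convexHull_zero_single_single_eq_preimage :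
    convexHull ℝ {0, EuclideanSpace.single 0 1, EuclideanSpace.single 1 1} =
      (fun x : ℝ² => (x 0, x 1)) ⁻¹' {p : ℝ × ℝ | p.1 ∈ Icc 0 1 ∧ p.2 ∈ Icc 0 (1 - p.1)} := by
  apply Subset.antisymm
  · refine convexHull_min ?_ ?_
    · rintro x (rfl | rfl | rfl) <;> norm_num
    · rintro x ⟨⟨hx0, -⟩, hx1, hx⟩ y ⟨⟨hy0, -⟩, hy1, hy⟩ s t hs ht hst
      simp only [mem_preimage, mem_ofPred_eq, PiLp.add_apply, PiLp.smul_apply, smul_eq_mul,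
        mem_Icc]
      refine ⟨⟨?_, ?_⟩, ?_, ?_⟩ <;> nlinarith
  · rintro x ⟨⟨hx0, -⟩, hx1, hx⟩
    have hcomb : x = ∑ i, ![1 - x 0 - x 1, x 0, x 1] i •
        ![0, EuclideanSpace.single 0 1, EuclideanSpace.single 1 1] i := by
      ext j; fin_cases j <;> simp [Fin.sum_univ_three]
    rw [hcomb]
    refine (convex_convexHull ℝ _).sum_mem ?_ ?_ ?_
    · intro i _; fin_cases i <;> simp <;> linarith
    · simp [Fin.sum_univ_three]
      ring
    · intro i _
      apply subset_convexHull
      fin_cases i <;> simp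

theorem volume_convexHull_zero_single_single :
    volume (convexHull ℝ {0, EuclideanSpace.single 0 1, EuclideanSpace.single 1 1} : Set ℝ²) =
      ENNReal.ofReal (1 / 2) := by
  have hmp : MeasurePreserving (fun x : ℝ² => (x 0, x 1)) :=
    (volume_preserving_finTwoArrow ℝ).comp (PiLp.volume_preserving_ofLp (Fin 2))
  rw [convexHull_zero_single_single_eq_preimage, hmp.measure_preimage, volume_stdTriangle]
  exact (measurableSet_region_between_cc measurable_const (by fun_prop)
    measurableSet_Icc).nullMeasurableSet

theorem Matrix.det_toEuclideanLin {n : Type*} [Fintype n] [DecidableEq n] (M : Matrix n n ℝ) :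
    LinearMap.det (Matrix.toEuclideanLin M) = M.det := by
  rw [Matrix.toEuclideanLin_eq_toLin_orthonormal, LinearMap.det_toLin]

theorem convexHull_zero_pair_eq_image_toEuclideanLin (u v : ℝ²) :
    convexHull ℝ {0, u, v} = Matrix.toEuclideanLin !![u 0, v 0; u 1, v 1] ''
      convexHull ℝ {0, EuclideanSpace.single 0 1, EuclideanSpace.single 1 1} := by
  set L := Matrix.toEuclideanLin !![u 0, v 0; u 1, v 1]
  have hL₀ : L (EuclideanSpace.single 0 1) = u := by ext i; fin_cases i <;> simp [L]
  have hL₁ : L (EuclideanSpace.single 1 1) = v := by ext i; fin_cases i <;> simp [L]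
  rw [LinearMap.image_convexHull, image_insert_eq, image_insert_eq, image_singleton, map_zero,
    hL₀, hL₁]

theorem volume_convexHull_triangle (a b c : ℝ²) :
    volume (convexHull ℝ {a, b, c}) =
      ENNReal.ofReal (|(b 0 - a 0) * (c 1 - a 1) - (c 0 - a 0) * (b 1 - a 1)| / 2) := by
  have hshift : ({a, b, c} : Set ℝ²) = a +ᵥ ({0, b - a, c - a} : Set ℝ²) := by
    simp [vadd_set_insert]
  rw [hshift, convexHull_vadd, measure_vadd, convexHull_zero_pair_eq_image_toEuclideanLin,
    Measure.addHaar_image_linearMap, Matrix.det_toEuclideanLin,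
    volume_convexHull_zero_single_single, ← ENNReal.ofReal_mul (abs_nonneg _),
    Matrix.det_fin_two_of]
  congr 1
  simp only [PiLp.sub_apply]
  ring

theorem Matrix.det_cayleyMenger_fin_four {R : Type*} [CommRing R] (x y z : R) :
    !![0, 1, 1, 1; 1, 0, x, y; 1, x, 0, z; 1, y, z, 0].det =
      x ^ 2 + y ^ 2 + z ^ 2 - 2 * (x * y + x * z + y * z) := by
  simp [Matrix.det_succ_row_zero, Fin.sum_univ_succ, Fin.succAbove]
  ring

theorem cayleyMenger_eq_of_dist (a b c : ℝ²) :
    cayleyMenger a b c =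
      !![0, 1, 1, 1;
         1, 0, dist a b ^ 2, dist a c ^ 2;
         1, dist a b ^ 2, 0, dist b c ^ 2;
         1, dist a c ^ 2, dist b c ^ 2, 0] := by
  ext i j
  fin_cases i <;> fin_cases j <;>
    simp [cayleyMenger, Fin.cons, Fin.cases, Fin.induction, Fin.induction.go, dist_comm]

theorem EuclideanSpace.dist_sq_eq_fin_two (x y : ℝ²) :
    dist x y ^ 2 = (x 0 - y 0) ^ 2 + (x 1 - y 1) ^ 2 := by
  simp [EuclideanSpace.dist_sq_eq, Fin.sum_univ_two, Real.dist_eq, sq_abs]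

theorem cayleyMenger_det_eq_neg_four_mul_sq (a b c : ℝ²) :
    (cayleyMenger a b c).det =
      -4 * ((b 0 - a 0) * (c 1 - a 1) - (c 0 - a 0) * (b 1 - a 1)) ^ 2 := by
  simp only [cayleyMenger_eq_of_dist, Matrix.det_cayleyMenger_fin_four,
    EuclideanSpace.dist_sq_eq_fin_two]
  ring

/-- Cayley–Menger determinant formula in the plane (Eqs. (10)-(11) with `m = 2`):
the determinant of the Cayley–Menger matrix of `a, b, c` equals `−16` times the
square of the area of the triangle with vertices `a, b, c`. -/
theorem cayleyMenger_det_eq_neg_sixteen_mul_area_sq (a b c : EuclideanSpace ℝ (Fin 2)) :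
    (cayleyMenger a b c).det =
      -16 * (volume (convexHull ℝ ({a, b, c} : Set (EuclideanSpace ℝ (Fin 2))))).toReal ^ 2 := by
  rw [cayleyMenger_det_eq_neg_four_mul_sq, volume_convexHull_triangle,
    ENNReal.toReal_ofReal (by positivity), div_pow, sq_abs]
  ring
end

section
/- (Theorem 1, DILOC convergence.) Let P ∈ ℝ^{N×N} and B ∈ ℝ^{N×M} be entrywise nonnegative with ∑_j P_{ij} + ∑_m B_{im} = 1 for every i, and suppose for every index i there exist r ≥ 0 and indices i = j_0, …, j_r with P_{j_t, j_{t+1}} > 0 for t < r and ∑_m B_{j_r, m} > 0. Let U ∈ ℝ^{M×m} (anchor coordinates) and let X* ∈ ℝ^{N×m} satisfy the barycentric fixed-point equations X* = P·X* + B·U. Then for every initial condition X_0 ∈ ℝ^{N×m}, the DILOC iterates X_{k+1} = P·X_k + B·U converge to X* as k → ∞. -/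
/-!
The error `X k - X*` equals `P ^ k (X 0 - X*)`, so it suffices that `P ^ k → 0`. The row sums
`P ^ k 1` of the substochastic matrix `P` are nonincreasing in `k`, and a row `i` whose agent is
joined to an anchor by a path of length `r` has already lost mass after `r + 1` steps. Hence some
power `P ^ K` has all row sums below `1`, i.e. `‖P ^ K‖ < 1` in the `ℓ∞` operator norm, while
`‖P‖ ≤ 1`; the norms `‖P ^ k‖` are therefore nonincreasing with a geometrically decaying
subsequence.
-/

open Filter Topology Matrix

theorem tendsto_pow_atTop_nhds_zero_of_norm_pow_lt_one {R : Type*} [SeminormedRing R] {a : R}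
    (ha : ‖a‖ ≤ 1) {K : ℕ} (hK : 0 < K) (haK : ‖a ^ K‖ < 1) :
    Tendsto (fun k => a ^ k) atTop (𝓝 0) := by
  have hanti : Antitone fun k => ‖a ^ k‖ := antitone_nat_of_succ_le fun k =>
    calc ‖a ^ (k + 1)‖ = ‖a ^ k * a‖ := by rw [pow_succ]
      _ ≤ ‖a ^ k‖ * ‖a‖ := norm_mul_le _ _
      _ ≤ ‖a ^ k‖ := mul_le_of_le_one_right (norm_nonneg _) ha
  rw [tendsto_zero_iff_norm_tendsto_zero,
    tendsto_iff_tendsto_subseq_of_antitone hanti (tendsto_id.const_mul_atTop' hK)]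
  simpa [Function.comp_def, pow_mul] using (tendsto_pow_atTop_nhds_zero_of_norm_lt_one haK).norm

namespace Matrix

theorem iterate_eq_add_pow_mul_sub {R n o : Type*} [Ring R] [Fintype n] [DecidableEq n]
    {P : Matrix n n R} {C xstar : Matrix n o R} {X : ℕ → Matrix n o R}
    (hfix : xstar = P * xstar + C) (hrec : ∀ k, X (k + 1) = P * X k + C) (k : ℕ) :
    X k = xstar + P ^ k * (X 0 - xstar) := by
  induction k with
  | zero => simp
  | succ k ih =>
    rw [hrec, ih, Matrix.mul_add, pow_succ', Matrix.mul_assoc, add_right_comm, ← hfix]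

variable {n : Type*} [Fintype n] {P : Matrix n n ℝ}

theorem mulVec_mono_of_nonneg (hP : ∀ i j, 0 ≤ P i j) {v w : n → ℝ}
    (hvw : v ≤ w) : P *ᵥ v ≤ P *ᵥ w :=
  fun i => dotProduct_le_dotProduct_of_nonneg_left hvw (hP i)

theorem mulVec_apply_lt_mulVec_apply_of_pos (hP : ∀ i j, 0 ≤ P i j)
    {v w : n → ℝ} (hvw : v ≤ w) {i j : n} (hij : 0 < P i j) (hj : v j < w j) :
    (P *ᵥ v) i < (P *ᵥ w) i :=
  Finset.sum_lt_sum (fun l _ => mul_le_mul_of_nonneg_left (hvw l) (hP i l))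
    ⟨j, Finset.mem_univ j, mul_lt_mul_of_pos_left hj hij⟩

theorem mulVec_one_nonneg (hP : ∀ i j, 0 ≤ P i j) : 0 ≤ P *ᵥ 1 := by
  simpa using mulVec_mono_of_nonneg hP (zero_le_one : (0 : n → ℝ) ≤ 1)

variable [DecidableEq n]

section LinftyOpNorm

attribute [local instance] Matrix.linftyOpNormedRing

theorem linfty_opNorm_eq_norm_mulVec_one (hP : ∀ i j, 0 ≤ P i j) :
    ‖P‖ = ‖P *ᵥ 1‖ := by
  have h : ‖P‖₊ = ‖P *ᵥ 1‖₊ := by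
    rw [linfty_opNNNorm_def, Pi.nnnorm_def]
    congr 1
    funext i
    ext
    simp [mulVec, dotProduct, Real.norm_of_nonneg (hP i _),
      abs_of_nonneg (Finset.sum_nonneg fun j _ => hP i j)]
  exact congrArg NNReal.toReal h

end LinftyOpNorm

theorem pow_mulVec_one_le_one (hP : ∀ i j, 0 ≤ P i j) (hP1 : P *ᵥ 1 ≤ 1) (k : ℕ) :
    P ^ k *ᵥ 1 ≤ 1 := by
  induction k with
  | zero => simp
  | succ k ih =>
    rw [pow_succ', ← mulVec_mulVec]
    exact (mulVec_mono_of_nonneg hP ih).trans hP1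

theorem antitone_pow_mulVec_one (hP : ∀ i j, 0 ≤ P i j) (hP1 : P *ᵥ 1 ≤ 1) :
    Antitone fun k => P ^ k *ᵥ 1 :=
  antitone_nat_of_succ_le fun k => by
    rw [pow_succ, ← mulVec_mulVec]
    simpa using mulVec_mono_of_nonneg (pow_apply_nonneg hP k) hP1

theorem pow_succ_mulVec_one_apply_lt_one (hP : ∀ i j, 0 ≤ P i j) (hP1 : P *ᵥ 1 ≤ 1)
    {i j : n} {k : ℕ} (hij : 0 < P i j) (hj : (P ^ k *ᵥ 1) j < 1) :
    (P ^ (k + 1) *ᵥ 1) i < 1 := by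
  rw [pow_succ', ← mulVec_mulVec]
  exact (mulVec_apply_lt_mulVec_apply_of_pos hP (pow_mulVec_one_le_one hP hP1 k) hij hj).trans_le
    (hP1 i)

theorem pow_mulVec_one_apply_lt_one_of_path (hP : ∀ i j, 0 ≤ P i j) (hP1 : P *ᵥ 1 ≤ 1)
    {r : ℕ} {jseq : ℕ → n} (hpath : ∀ t < r, 0 < P (jseq t) (jseq (t + 1)))
    (hleak : (P *ᵥ 1) (jseq r) < 1) : (P ^ (r + 1) *ᵥ 1) (jseq 0) < 1 := by
  induction r generalizing jseq with
  | zero => simpa using hleak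
  | succ r ih =>
    refine pow_succ_mulVec_one_apply_lt_one hP hP1 (hpath 0 r.succ_pos) ?_
    exact ih (jseq := fun t => jseq (t + 1)) (fun t ht => hpath (t + 1) (by omega)) hleak

theorem exists_pow_mulVec_one_apply_lt_one (hP : ∀ i j, 0 ≤ P i j) (hP1 : P *ᵥ 1 ≤ 1)
    (hleak : ∀ i, ∃ k, (P ^ k *ᵥ 1) i < 1) : ∃ K, 0 < K ∧ ∀ i, (P ^ K *ᵥ 1) i < 1 := by
  choose k hk using hleak
  refine ⟨Finset.univ.sup k + 1, Nat.succ_pos _, fun i => ?_⟩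
  have hle : k i ≤ Finset.univ.sup k + 1 := (Finset.le_sup (Finset.mem_univ i)).trans le_self_add
  exact (antitone_pow_mulVec_one hP hP1 hle i).trans_lt (hk i)

theorem tendsto_pow_atTop_nhds_zero_of_substochastic (hP : ∀ i j, 0 ≤ P i j)
    (hP1 : P *ᵥ 1 ≤ 1) (hleak : ∀ i, ∃ k, (P ^ k *ᵥ 1) i < 1) :
    Tendsto (fun k => P ^ k) atTop (𝓝 0) := by
  let _ := Matrix.linftyOpNormedRing (n := n) (α := ℝ)
  obtain ⟨K, hK, hPK⟩ := exists_pow_mulVec_one_apply_lt_one hP hP1 hleak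
  have hPK_nonneg := pow_apply_nonneg hP K
  refine tendsto_pow_atTop_nhds_zero_of_norm_pow_lt_one ?_ hK ?_
  · rw [linfty_opNorm_eq_norm_mulVec_one hP, pi_norm_le_iff_of_nonneg zero_le_one]
    exact fun i => (Real.norm_of_nonneg (mulVec_one_nonneg hP i)).trans_le (hP1 i)
  · rw [linfty_opNorm_eq_norm_mulVec_one hPK_nonneg, pi_norm_lt_iff one_pos]
    exact fun i => (Real.norm_of_nonneg (mulVec_one_nonneg hPK_nonneg i)).trans_lt (hPK i)

end Matrix

/-- Theorem 1 (DILOC convergence): if the barycentric matrices `P, B` are nonnegative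
with `[B P]` row-stochastic and every agent has a path of positive entries of `P`
leading to a row of `B` with positive sum, and the true locations `Xstar` satisfy the
barycentric fixed-point equation `Xstar = P Xstar + B U`, then the DILOC iterates
`X (k+1) = P * X k + B * U` converge to `Xstar` from every initial condition `X 0`. -/
theorem diloc_converges {N M m : ℕ}
    (P : Matrix (Fin N) (Fin N) ℝ) (B : Matrix (Fin N) (Fin M) ℝ)
    (hP : ∀ i j, 0 ≤ P i j) (hB : ∀ i m', 0 ≤ B i m')
    (hrow : ∀ i, ∑ j, P i j + ∑ m', B i m' = 1)
    (hconn : ∀ i : Fin N, ∃ (r : ℕ) (jseq : ℕ → Fin N), jseq 0 = i ∧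
      (∀ t < r, 0 < P (jseq t) (jseq (t + 1))) ∧ 0 < ∑ m', B (jseq r) m')
    (U : Matrix (Fin M) (Fin m) ℝ) (Xstar : Matrix (Fin N) (Fin m) ℝ)
    (hfix : Xstar = P * Xstar + B * U)
    (X : ℕ → Matrix (Fin N) (Fin m) ℝ)
    (hrec : ∀ k, X (k + 1) = P * X k + B * U) :
    Tendsto X atTop (nhds Xstar) := by
  have hrowSum : ∀ i, (P *ᵥ 1) i = 1 - ∑ m', B i m' := fun i => by
    simp only [mulVec, dotProduct, Pi.one_apply, mul_one]
    linarith [hrow i]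
  have hP1 : P *ᵥ 1 ≤ 1 := fun i => by
    simpa [hrowSum] using Finset.sum_nonneg fun m' _ => hB i m'
  have hleak : ∀ i, ∃ k, (P ^ k *ᵥ 1) i < 1 := fun i => by
    obtain ⟨r, jseq, rfl, hpath, hanchor⟩ := hconn i
    exact ⟨r + 1, pow_mulVec_one_apply_lt_one_of_path hP hP1 hpath (by simpa [hrowSum])⟩
  have hPk := tendsto_pow_atTop_nhds_zero_of_substochastic hP hP1 hleak
  have herr :=
    ((continuous_id.matrix_mul (continuous_const (y := X 0 - Xstar))).tendsto 0).comp hPk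
  rw [funext (iterate_eq_add_pow_mul_sub hfix hrec)]
  simpa using tendsto_const_nhds.add herr
end

section
/- Let (P_k)_{k≥0} be a sequence of N×N real matrices, each entrywise nonnegative with all row sums at most 1. Define the backward products Q_0 = I and Q_{k+1} = P_k · Q_k. Suppose there exist α ∈ (0,1) and a strictly increasing sequence of times k_0 < k_1 < k_2 < ⋯ such that for every j, every row sum of the window product P_{k_{j+1}−1} · P_{k_{j+1}−2} ⋯ P_{k_j} is at most 1 − α. Then Q_k → 0 (entrywise) as k → ∞. -/
open Filter

/-- The backward product `P_{b-1} * P_{b-2} * ⋯ * P_a` of a sequence of matrices over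
the window `[a, b)` (equal to `1` when `b ≤ a`). -/
noncomputable def windowProd {N : ℕ} (P : ℕ → Matrix (Fin N) (Fin N) ℝ) (a b : ℕ) :
    Matrix (Fin N) (Fin N) ℝ :=
  ((List.range (b - a)).map fun t => P (b - 1 - t)).prod

lemma windowProd_self {N : ℕ} (P : ℕ → Matrix (Fin N) (Fin N) ℝ) (a : ℕ) :
    windowProd P a a = 1 := by
  simp [windowProd]

lemma windowProd_succ {N : ℕ} (P : ℕ → Matrix (Fin N) (Fin N) ℝ) {a b : ℕ} (h : a ≤ b) :
    windowProd P a (b + 1) = P b * windowProd P a b := by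
  unfold windowProd
  rw [show b + 1 - a = (b - a) + 1 by omega, List.range_succ_eq_map]
  rw [List.map_cons, List.prod_cons, List.map_map]
  congr 1
  have hfun : ((fun t => P (b + 1 - 1 - t)) ∘ Nat.succ) = fun t => P (b - 1 - t) := by
    funext t
    show P (b + 1 - 1 - (t + 1)) = P (b - 1 - t)
    rw [show b + 1 - 1 - (t + 1) = b - 1 - t by omega]
  rw [hfun]

lemma rowsum_mul_le {N : ℕ} {A B : Matrix (Fin N) (Fin N) ℝ}
    (hA : ∀ i j, 0 ≤ A i j) {c : ℝ}
    (hBr : ∀ l, ∑ j, B l j ≤ c) (i : Fin N) :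
    ∑ j, (A * B) i j ≤ (∑ j, A i j) * c := by
  simp only [Matrix.mul_apply]
  rw [Finset.sum_comm]
  calc ∑ l, ∑ j, A i l * B l j = ∑ l, A i l * ∑ j, B l j := by
        simp [Finset.mul_sum]
    _ ≤ ∑ l, A i l * c := by
        exact Finset.sum_le_sum fun l _ =>
          mul_le_mul_of_nonneg_left (hBr l) (hA i l)
    _ = (∑ l, A i l) * c := by rw [Finset.sum_mul]

/-- The matrix-product convergence result underlying Theorem 2: if each `P_k` is
nonnegative with row sums at most `1`, and along a strictly increasing sequence of
times `k_0 < k_1 < ⋯` every row sum of each window product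
`P_{k_{j+1}-1} ⋯ P_{k_j}` is at most `1 - α` for some `α ∈ (0,1)`, then the backward
products `Q_0 = I`, `Q_{k+1} = P_k Q_k` converge to zero. -/
theorem backward_products_tendsto_zero {N : ℕ} (P : ℕ → Matrix (Fin N) (Fin N) ℝ)
    (hP : ∀ k i j, 0 ≤ P k i j) (hrow : ∀ k i, ∑ j, P k i j ≤ 1)
    (α : ℝ) (hα0 : 0 < α) (hα1 : α < 1)
    (kseq : ℕ → ℕ) (hk : StrictMono kseq)
    (hwin : ∀ j i, ∑ l, windowProd P (kseq j) (kseq (j + 1)) i l ≤ 1 - α)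
    (Q : ℕ → Matrix (Fin N) (Fin N) ℝ)
    (hQ0 : Q 0 = 1) (hQ : ∀ k, Q (k + 1) = P k * Q k) :
    Tendsto Q atTop (nhds 0) := by
  -- nonnegativity of Q
  have hQnn : ∀ k i j, 0 ≤ Q k i j := by
    intro k
    induction k with
    | zero =>
      intro i j
      rw [hQ0, Matrix.one_apply]
      split <;> norm_num
    | succ k ih =>
      intro i j
      rw [hQ k, Matrix.mul_apply]
      exact Finset.sum_nonneg fun l _ => mul_nonneg (hP k i l) (ih l j)
  -- nonnegativity of window products
  have hWnn : ∀ a b, a ≤ b → ∀ i j, 0 ≤ windowProd P a b i j := by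
    intro a b h
    induction b, h using Nat.le_induction with
    | base =>
      intro i j
      rw [windowProd_self, Matrix.one_apply]
      split <;> norm_num
    | succ b hab ih =>
      intro i j
      rw [windowProd_succ P hab, Matrix.mul_apply]
      exact Finset.sum_nonneg fun l _ => mul_nonneg (hP b i l) (ih l j)
  -- row sums of window products are ≤ 1
  have hWrow : ∀ a b, a ≤ b → ∀ i, ∑ j, windowProd P a b i j ≤ 1 := by
    intro a b h
    induction b, h using Nat.le_induction with
    | base =>
      intro i
      rw [windowProd_self]
      simp [Matrix.one_apply]
    | succ b hab ih =>
      intro i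
      rw [windowProd_succ P hab]
      calc ∑ j, (P b * windowProd P a b) i j ≤ (∑ j, P b i j) * 1 :=
            rowsum_mul_le (hP b) ih i
        _ ≤ 1 := by rw [mul_one]; exact hrow b i
  -- Q b = windowProd P a b * Q a for a ≤ b
  have hQeq : ∀ a b, a ≤ b → Q b = windowProd P a b * Q a := by
    intro a b h
    induction b, h using Nat.le_induction with
    | base => rw [windowProd_self, one_mul]
    | succ b hab ih =>
      rw [hQ b, ih, windowProd_succ P hab, Matrix.mul_assoc]
  -- row sums of Q are ≤ 1
  have hQrow : ∀ k i, ∑ j, Q k i j ≤ 1 := by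
    intro k
    induction k with
    | zero => intro i; rw [hQ0]; simp [Matrix.one_apply]
    | succ k ih =>
      intro i
      rw [hQ k]
      calc ∑ j, (P k * Q k) i j ≤ (∑ j, P k i j) * 1 := rowsum_mul_le (hP k) ih i
        _ ≤ 1 := by rw [mul_one]; exact hrow k i
  -- row sums of Q at kseq j are ≤ (1-α)^j
  have hQj : ∀ j i, ∑ l, Q (kseq j) i l ≤ (1 - α) ^ j := by
    intro j
    induction j with
    | zero => intro i; simpa using hQrow (kseq 0) i
    | succ j ih =>
      intro i
      have hle : kseq j ≤ kseq (j + 1) := (hk (Nat.lt_succ_self j)).le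
      rw [hQeq (kseq j) (kseq (j + 1)) hle]
      calc ∑ l, (windowProd P (kseq j) (kseq (j + 1)) * Q (kseq j)) i l
            ≤ (∑ l, windowProd P (kseq j) (kseq (j + 1)) i l) * (1 - α) ^ j :=
            rowsum_mul_le (hWnn _ _ hle) ih i
        _ ≤ (1 - α) * (1 - α) ^ j := by
            exact mul_le_mul_of_nonneg_right (hwin j i)
              (pow_nonneg (by linarith) j)
        _ = (1 - α) ^ (j + 1) := (pow_succ' _ _).symm
  -- general bound: for k ≥ kseq j, row sums of Q k are ≤ (1-α)^j
  have hfinal : ∀ j k, kseq j ≤ k → ∀ i, ∑ l, Q k i l ≤ (1 - α) ^ j := by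
    intro j k h i
    rw [hQeq (kseq j) k h]
    calc ∑ l, (windowProd P (kseq j) k * Q (kseq j)) i l
          ≤ (∑ l, windowProd P (kseq j) k i l) * (1 - α) ^ j :=
          rowsum_mul_le (hWnn _ _ h) (hQj j) i
      _ ≤ 1 * (1 - α) ^ j := by
          exact mul_le_mul_of_nonneg_right (hWrow _ _ h i)
            (pow_nonneg (by linarith) j)
      _ = (1 - α) ^ j := one_mul _
  -- conclude
  refine tendsto_pi_nhds.mpr fun i => tendsto_pi_nhds.mpr fun j => ?_
  rw [Metric.tendsto_atTop]
  intro ε hε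
  have hpow : Tendsto (fun n => (1 - α) ^ n) atTop (nhds 0) :=
    tendsto_pow_atTop_nhds_zero_of_lt_one (by linarith) (by linarith)
  obtain ⟨j0, hj0⟩ := (hpow.eventually (gt_mem_nhds hε)).exists
  refine ⟨kseq j0, fun k hkk => ?_⟩
  have h1 : Q k i j ≤ (1 - α) ^ j0 := by
    calc Q k i j ≤ ∑ l, Q k i l :=
          Finset.single_le_sum (fun l _ => hQnn k i l) (Finset.mem_univ j)
      _ ≤ (1 - α) ^ j0 := hfinal j0 k hkk i
  have h2 : 0 ≤ Q k i j := hQnn k i j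
  have hz : (0 : Matrix (Fin N) (Fin N) ℝ) i j = 0 := rfl
  rw [hz, Real.dist_eq, sub_zero, abs_of_nonneg h2]
  exact lt_of_le_of_lt h1 hj0
end

section
/- (Deterministic DILAND-type convergence.) Let P ∈ ℝ^{N×N} be entrywise nonnegative with maximum row sum γ < 1, let c ∈ ℝ^{N×m}, and let x* = (I − P)^{-1} c be the unique solution of x = P x + c. Let (α_k)_{k≥0} satisfy α_k ∈ (0,1] for all k and ∑_k α_k = ∞. Then for every initial condition x_0 ∈ ℝ^{N×m}, the iterates x_{k+1} = (1 − α_k) x_k + α_k (P x_k + c) converge to x* as k → ∞. -/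
/-!
Since `x* = P x* + c`, the error `e_k = x_k - x*` obeys `e_{k+1} = (1 - α_k) e_k + α_k P e_k`.
In the entrywise sup norm, multiplication by `P` shrinks by the factor `γ`, so
`‖e_{k+1}‖ ≤ (1 - (1 - γ) α_k) ‖e_k‖ ≤ exp (-(1 - γ) α_k) ‖e_k‖`, and `‖e_k‖` is bounded by
`exp (-(1 - γ) ∑_{j<k} α_j) ‖e_0‖ → 0`. The same contraction estimate shows that `1 - P` has trivial
kernel, so `x* = (1 - P)⁻¹ c` really is the fixed point.
-/

open Filter Finset

theorem le_exp_neg_mul_sum_mul {β : ℝ} {α d : ℕ → ℝ} (hd : ∀ k, 0 ≤ d k)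
    (hstep : ∀ k, d (k + 1) ≤ (1 - β * α k) * d k) (n : ℕ) :
    d n ≤ Real.exp (-(β * ∑ k ∈ range n, α k)) * d 0 := by
  induction n with
  | zero => simp
  | succ n ih =>
    calc d (n + 1) ≤ (1 - β * α n) * d n := hstep n
      _ ≤ Real.exp (-(β * α n)) * d n := by
          gcongr
          · exact hd n
          · linarith [Real.add_one_le_exp (-(β * α n))]
      _ ≤ Real.exp (-(β * α n)) * (Real.exp (-(β * ∑ k ∈ range n, α k)) * d 0) := by
          gcongr
      _ = Real.exp (-(β * ∑ k ∈ range (n + 1), α k)) * d 0 := by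
          rw [← mul_assoc, ← Real.exp_add, sum_range_succ]
          ring_nf

theorem tendsto_zero_of_le_one_sub_mul {β : ℝ} (hβ : 0 < β) {α d : ℕ → ℝ}
    (hdiv : Tendsto (fun n => ∑ k ∈ range n, α k) atTop atTop) (hd : ∀ k, 0 ≤ d k)
    (hstep : ∀ k, d (k + 1) ≤ (1 - β * α k) * d k) :
    Tendsto d atTop (nhds 0) := by
  have hexp : Tendsto (fun n => Real.exp (-(β * ∑ k ∈ range n, α k)) * d 0) atTop (nhds 0) := by
    simpa using (Real.tendsto_exp_atBot.comp
      (tendsto_neg_atTop_atBot.comp (hdiv.const_mul_atTop hβ))).mul_const (d 0)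
  exact squeeze_zero hd (le_exp_neg_mul_sum_mul hd hstep) hexp

/-- Krasnosel'skii–Mann averaging of a map that contracts towards its fixed point `z`. -/
theorem tendsto_of_averaged_iterate {E : Type*} [NormedAddCommGroup E] [NormedSpace ℝ E]
    {T : E → E} {z : E} {γ : ℝ} (hγ : γ < 1) (hfix : T z = z)
    (hT : ∀ y, ‖T y - T z‖ ≤ γ * ‖y - z‖) {α : ℕ → ℝ} (hα : ∀ k, α k ∈ Set.Icc (0 : ℝ) 1)
    (hdiv : Tendsto (fun n => ∑ k ∈ range n, α k) atTop atTop) {x : ℕ → E}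
    (hrec : ∀ k, x (k + 1) = (1 - α k) • x k + α k • T (x k)) :
    Tendsto x atTop (nhds z) := by
  have hstep : ∀ k, ‖x (k + 1) - z‖ ≤ (1 - (1 - γ) * α k) * ‖x k - z‖ := fun k => by
    obtain ⟨hα0, hα1⟩ := hα k
    have herr : x (k + 1) - z = (1 - α k) • (x k - z) + α k • (T (x k) - T z) := by
      rw [hrec k, hfix]; module
    calc ‖x (k + 1) - z‖ ≤ (1 - α k) * ‖x k - z‖ + α k * ‖T (x k) - T z‖ := by
          rw [herr]
          refine (norm_add_le _ _).trans_eq ?_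
          rw [norm_smul, norm_smul, Real.norm_of_nonneg (sub_nonneg.2 hα1),
            Real.norm_of_nonneg hα0]
      _ ≤ (1 - α k) * ‖x k - z‖ + α k * (γ * ‖x k - z‖) := by gcongr; exact hT _
      _ = (1 - (1 - γ) * α k) * ‖x k - z‖ := by ring
  exact tendsto_iff_norm_sub_tendsto_zero.2 <|
    tendsto_zero_of_le_one_sub_mul (sub_pos.2 hγ) hdiv (fun _ => norm_nonneg _) hstep

namespace Matrix

attribute [local instance] Matrix.seminormedAddCommGroup Matrix.normedAddCommGroup
  Matrix.normedSpace

variable {n ι : Type*} [Fintype n] [Fintype ι] {P : Matrix n n ℝ} {γ : ℝ}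

theorem norm_mul_le_of_row_sum_le (hP : ∀ i j, 0 ≤ P i j) (hrow : ∀ i, ∑ j, P i j ≤ γ)
    (hγ : 0 ≤ γ) (y : Matrix n ι ℝ) : ‖P * y‖ ≤ γ * ‖y‖ := by
  refine (norm_le_iff (by positivity)).2 fun i j => ?_
  calc ‖(P * y) i j‖ = |∑ l, P i l * y l j| := by rw [mul_apply, Real.norm_eq_abs]
    _ ≤ ∑ l, P i l * |y l j| := by
        refine (abs_sum_le_sum_abs _ _).trans_eq (sum_congr rfl fun l _ => ?_)
        rw [abs_mul, abs_of_nonneg (hP i l)]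
    _ ≤ ∑ l, P i l * ‖y‖ := by
        gcongr with l
        · exact hP i l
        · exact norm_entry_le_entrywise_sup_norm y
    _ = (∑ l, P i l) * ‖y‖ := by rw [sum_mul]
    _ ≤ γ * ‖y‖ := by gcongr; exact hrow i

theorem isUnit_one_sub_of_row_sum_le [DecidableEq n] (hP : ∀ i j, 0 ≤ P i j)
    (hrow : ∀ i, ∑ j, P i j ≤ γ) (hγ0 : 0 ≤ γ) (hγ : γ < 1) : IsUnit (1 - P) := by
  rw [← mulVec_injective_iff_isUnit, ← coe_mulVecLin, injective_iff_map_eq_zero]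
  intro v hv
  rw [coe_mulVecLin] at hv
  have hv' : P *ᵥ v = v := by
    rwa [sub_mulVec, one_mulVec, sub_eq_zero, eq_comm] at hv
  -- view `v` as a one-column matrix to apply the norm estimate
  have hY : P * replicateCol Unit v = replicateCol Unit v := by rw [← replicateCol_mulVec, hv']
  have hnorm := hY ▸ norm_mul_le_of_row_sum_le hP hrow hγ0 (replicateCol Unit v)
  have hY0 : replicateCol Unit v = 0 :=
    norm_le_zero_iff.1 (by nlinarith [norm_nonneg (replicateCol Unit v)])
  simpa using hY0

end Matrix

/-- Deterministic DILAND-type convergence (noise-free core of Theorem 3, Eq. (23)):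
for a nonnegative matrix `P` with maximum row sum `γ < 1`, the iterates
`x_{k+1} = (1 - α_k) x_k + α_k (P x_k + c)` with persistence weights `α_k ∈ (0,1]`,
`∑ α_k = ∞`, converge to the unique fixed point `x* = (I - P)⁻¹ c` from every
initial condition. -/
theorem diland_deterministic_converges {N m : ℕ} (P : Matrix (Fin N) (Fin N) ℝ)
    (γ : ℝ) (hP : ∀ i j, 0 ≤ P i j) (hrow : ∀ i, ∑ j, P i j ≤ γ) (hγ : γ < 1)
    (c : Matrix (Fin N) (Fin m) ℝ)
    (xstar : Matrix (Fin N) (Fin m) ℝ)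
    (hxstar : xstar = ((1 : Matrix (Fin N) (Fin N) ℝ) - P)⁻¹ * c)
    (α : ℕ → ℝ) (hα : ∀ k, α k ∈ Set.Ioc (0 : ℝ) 1)
    (hdiv : Tendsto (fun n => ∑ k ∈ Finset.range n, α k) atTop atTop)
    (x : ℕ → Matrix (Fin N) (Fin m) ℝ)
    (hrec : ∀ k, x (k + 1) = (1 - α k) • x k + α k • (P * x k + c)) :
    Tendsto x atTop (nhds xstar) := by
  let _ : NormedAddCommGroup (Matrix (Fin N) (Fin m) ℝ) := Matrix.normedAddCommGroup
  let _ : NormedSpace ℝ (Matrix (Fin N) (Fin m) ℝ) := Matrix.normedSpace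
  -- `max γ 0` also bounds the row sums and avoids a case split on `N = 0`
  have hrow' : ∀ i, ∑ j, P i j ≤ max γ 0 := fun i => (hrow i).trans (le_max_left _ _)
  have hγ' : max γ 0 < 1 := max_lt hγ zero_lt_one
  have hunit := Matrix.isUnit_one_sub_of_row_sum_le hP hrow' (le_max_right _ _) hγ'
  have hfix : P * xstar + c = xstar := by
    have h : (1 - P) * xstar = c := by
      rw [hxstar, ← Matrix.mul_assoc,
        Matrix.mul_nonsing_inv _ ((Matrix.isUnit_iff_isUnit_det _).1 hunit), Matrix.one_mul]
    rw [← h, Matrix.sub_mul, Matrix.one_mul]; abel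
  refine tendsto_of_averaged_iterate (E := Matrix (Fin N) (Fin m) ℝ) (T := fun y => P * y + c)
    hγ' hfix (fun y => ?_) (fun k => Set.Ioc_subset_Icc_self (hα k)) hdiv hrec
  simpa only [add_sub_add_right_eq_sub, ← Matrix.mul_sub] using
    Matrix.norm_mul_le_of_row_sum_le hP hrow' (le_max_right _ _) (y - xstar)
end

section
/- (DILAND with consistent estimates.) Let (P_k)_{k≥0} be N×N real matrices, each entrywise nonnegative with all row sums at most 1, converging entrywise to a matrix P whose maximum row sum is γ < 1, and let (c_k)_{k≥0} in ℝ^{N×m} converge to c. Let (α_k)_{k≥0} satisfy α_k ∈ (0,1] and ∑_k α_k = ∞. Then for every x_0 ∈ ℝ^{N×m}, the iterates x_{k+1} = (1 − α_k) x_k + α_k (P_k x_k + c_k) converge to x* = (I − P)^{-1} c as k → ∞. -/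
/-!
Write `x*` for the fixed point `P x* + c = x*`. In the `ℓ∞ → ℓ∞` operator norm (maximum absolute
row sum) a nonnegative matrix with row sums `≤ γ < 1` is a contraction, so `I - P` is invertible
and, since `P_k → P`, eventually `‖P_k‖ ≤ γ'` for some `γ' < 1`. The error `e_k = x_k - x*`
satisfies `e_{k+1} = (1 - α_k) e_k + α_k P_k e_k + α_k d_k` with
`d_k = (P_k - P) x* + (c_k - c) → 0`, hence
`‖e_{k+1}‖ ≤ (1 - β_k) ‖e_k‖ + β_k ‖d_k‖ / (1 - γ')` with `β_k = α_k (1 - γ')`.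
Since `∑ β_k = ∞`, the products `∏ (1 - β_k) ≤ exp (-∑ β_k)` vanish, and this scalar recursion
forces `‖e_k‖ → 0`.
-/

open Filter Topology Finset

theorem le_prod_mul_of_le_mul {v a : ℕ → ℝ} {K : ℕ} (ha : ∀ k, K ≤ k → 0 ≤ a k)
    (hv : ∀ k, K ≤ k → v (k + 1) ≤ a k * v k) {n : ℕ} (hn : K ≤ n) :
    v n ≤ (∏ k ∈ Ico K n, a k) * v K := by
  induction n, hn using Nat.le_induction with
  | base => simp
  | succ n hn ih =>
    calc v (n + 1) ≤ a n * v n := hv n hn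
      _ ≤ a n * ((∏ k ∈ Ico K n, a k) * v K) := mul_le_mul_of_nonneg_left ih (ha n hn)
      _ = (∏ k ∈ Ico K (n + 1), a k) * v K := by rw [prod_Ico_succ_top hn]; ring

theorem tendsto_prod_Ico_one_sub_of_tendsto_sum {β : ℕ → ℝ} (hβ1 : ∀ k, β k ≤ 1)
    (hβ : Tendsto (fun n => ∑ k ∈ range n, β k) atTop atTop) (K : ℕ) :
    Tendsto (fun n => ∏ k ∈ Ico K n, (1 - β k)) atTop (𝓝 0) := by
  have hexp : Tendsto (fun n => Real.exp (-(∑ k ∈ range n, β k - ∑ k ∈ range K, β k)))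
      atTop (𝓝 0) :=
    Real.tendsto_exp_atBot.comp <| tendsto_neg_atTop_atBot.comp <|
      tendsto_atTop_add_const_right _ _ hβ
  refine squeeze_zero' (Eventually.of_forall fun n => prod_nonneg fun k _ => sub_nonneg.2 (hβ1 k))
    ?_ hexp
  filter_upwards [eventually_ge_atTop K] with n hn
  calc ∏ k ∈ Ico K n, (1 - β k) ≤ ∏ k ∈ Ico K n, Real.exp (-β k) :=
        prod_le_prod (fun k _ => sub_nonneg.2 (hβ1 k)) fun k _ => by
          linarith [Real.add_one_le_exp (-β k)]
    _ = Real.exp (-(∑ k ∈ range n, β k - ∑ k ∈ range K, β k)) := by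
        rw [← Real.exp_sum, sum_neg_distrib, ← sum_Ico_eq_sub _ hn]

theorem tendsto_zero_of_le_one_sub_mul_add_mul {u β ε : ℕ → ℝ} (hu : ∀ k, 0 ≤ u k)
    (hβ0 : ∀ k, 0 ≤ β k) (hβ1 : ∀ k, β k ≤ 1)
    (hβ : Tendsto (fun n => ∑ k ∈ range n, β k) atTop atTop) (hε : Tendsto ε atTop (𝓝 0))
    (hrec : ∀ᶠ k in atTop, u (k + 1) ≤ (1 - β k) * u k + β k * ε k) :
    Tendsto u atTop (𝓝 0) := by
  refine tendsto_order.2 ⟨fun a ha => Eventually.of_forall fun k => ha.trans_le (hu k),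
    fun δ hδ => ?_⟩
  obtain ⟨K, hK⟩ := eventually_atTop.1 <|
    hrec.and (hε.eventually (ge_mem_nhds (half_pos hδ)))
  have hcontr : ∀ k, K ≤ k → u (k + 1) - δ / 2 ≤ (1 - β k) * (u k - δ / 2) := by
    intro k hk
    obtain ⟨hrecK, hεK⟩ := hK k hk
    nlinarith [mul_le_mul_of_nonneg_left hεK (hβ0 k)]
  have hq : Tendsto (fun n => (∏ k ∈ Ico K n, (1 - β k)) * (u K - δ / 2)) atTop (𝓝 0) := by
    simpa using (tendsto_prod_Ico_one_sub_of_tendsto_sum hβ1 hβ K).mul_const (u K - δ / 2)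
  filter_upwards [eventually_ge_atTop K, hq.eventually (gt_mem_nhds (half_pos hδ))]
    with n hn hqn
  linarith [le_prod_mul_of_le_mul (v := fun k => u k - δ / 2) (fun k _ => sub_nonneg.2 (hβ1 k))
    hcontr hn]

namespace Matrix

section LinftyOp

open scoped Norms.Operator

variable {n p : Type*} [Fintype n] [Fintype p]

theorem linfty_opNorm_le_of_nonneg_of_sum_le {A : Matrix n p ℝ} {r : ℝ} (hr : 0 ≤ r)
    (hA : ∀ i j, 0 ≤ A i j) (hrow : ∀ i, ∑ j, A i j ≤ r) : ‖A‖ ≤ r := by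
  rw [linfty_opNorm_def, ← NNReal.coe_mk r hr, NNReal.coe_le_coe]
  refine Finset.sup_le fun i _ => ?_
  rw [← NNReal.coe_le_coe, NNReal.coe_sum]
  simpa [Real.norm_of_nonneg (hA i _)] using hrow i

theorem norm_relaxed_step_sub_le {A B : Matrix n n ℝ} {x xs c c' : Matrix n p ℝ}
    {a γ : ℝ} (ha0 : 0 ≤ a) (ha1 : a ≤ 1) (hB : ‖B‖ ≤ γ) (hfix : A * xs + c = xs) :
    ‖(1 - a) • x + a • (B * x + c') - xs‖ ≤
      (1 - a * (1 - γ)) * ‖x - xs‖ + a * ‖(B - A) * xs + (c' - c)‖ := by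
  have herr : (1 - a) • x + a • (B * x + c') - xs =
      (1 - a) • (x - xs) + a • (B * (x - xs)) + a • ((B - A) * xs + (c' - c)) := by
    simp only [Matrix.mul_sub, Matrix.sub_mul]
    linear_combination (norm := module) a • hfix
  have hBx : ‖B * (x - xs)‖ ≤ γ * ‖x - xs‖ :=
    (linfty_opNorm_mul B _).trans (mul_le_mul_of_nonneg_right hB (norm_nonneg _))
  rw [herr]
  calc _ ≤ ‖(1 - a) • (x - xs)‖ + ‖a • (B * (x - xs))‖ + ‖a • ((B - A) * xs + (c' - c))‖ :=
      norm_add₃_le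
    _ ≤ (1 - a) * ‖x - xs‖ + a * (γ * ‖x - xs‖) + a * ‖(B - A) * xs + (c' - c)‖ := by
        rw [norm_smul, norm_smul, norm_smul, Real.norm_of_nonneg (sub_nonneg.2 ha1),
          Real.norm_of_nonneg ha0]
        gcongr
    _ = _ := by ring

variable {B : ℕ → Matrix n n ℝ} {A : Matrix n n ℝ} {c' : ℕ → Matrix n p ℝ}
  {c : Matrix n p ℝ} {α : ℕ → ℝ} {x : ℕ → Matrix n p ℝ}

theorem tendsto_relaxed_iteration_of_norm_lt_one {xs : Matrix n p ℝ}
    (hB : Tendsto B atTop (𝓝 A)) (hA : ‖A‖ < 1) (hc : Tendsto c' atTop (𝓝 c))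
    (hα0 : ∀ k, 0 ≤ α k) (hα1 : ∀ k, α k ≤ 1)
    (hα : Tendsto (fun n => ∑ k ∈ range n, α k) atTop atTop) (hfix : A * xs + c = xs)
    (hrec : ∀ k, x (k + 1) = (1 - α k) • x k + α k • (B k * x k + c' k)) :
    Tendsto x atTop (𝓝 xs) := by
  obtain ⟨γ, hAγ, hγ1⟩ := exists_between hA
  have hγ : 0 < 1 - γ := sub_pos.2 hγ1
  have hγ0 : 0 ≤ γ := (norm_nonneg A).trans hAγ.le
  have hBγ : ∀ᶠ k in atTop, ‖B k‖ ≤ γ :=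
    (hB.norm.eventually (gt_mem_nhds hAγ)).mono fun _ => le_of_lt
  set d := fun k => (B k - A) * xs + (c' k - c)
  have hd : Tendsto (fun k => ‖d k‖) atTop (𝓝 0) := by
    have := (((continuous_id.matrix_mul (continuous_const (y := xs))).tendsto _).comp
      (hB.sub_const A)).add (hc.sub_const c)
    simpa using this.norm
  refine tendsto_iff_norm_sub_tendsto_zero.2 <| tendsto_zero_of_le_one_sub_mul_add_mul
    (β := fun k => α k * (1 - γ)) (ε := fun k => ‖d k‖ / (1 - γ)) (fun _ => norm_nonneg _)
    (fun k => mul_nonneg (hα0 k) hγ.le) (fun k => mul_le_one₀ (hα1 k) hγ.le (by linarith))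
    (hα.atTop_mul_const hγ |>.congr fun n => sum_mul ..) (by simpa using hd.div_const (1 - γ)) ?_
  filter_upwards [hBγ] with k hk
  rw [hrec k, mul_assoc, mul_div_cancel₀ _ hγ.ne']
  exact norm_relaxed_step_sub_le (hα0 k) (hα1 k) hk hfix

theorem tendsto_relaxed_iteration_of_nonneg_of_sum_le [DecidableEq n] {γ : ℝ}
    (hB : Tendsto B atTop (𝓝 A)) (hA0 : ∀ i j, 0 ≤ A i j) (hrow : ∀ i, ∑ j, A i j ≤ γ)
    (hγ : γ < 1) (hc : Tendsto c' atTop (𝓝 c))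
    (hα0 : ∀ k, 0 ≤ α k) (hα1 : ∀ k, α k ≤ 1)
    (hα : Tendsto (fun n => ∑ k ∈ range n, α k) atTop atTop)
    (hrec : ∀ k, x (k + 1) = (1 - α k) • x k + α k • (B k * x k + c' k)) :
    Tendsto x atTop (𝓝 ((1 - A)⁻¹ * c)) := by
  have hA : ‖A‖ < 1 := (linfty_opNorm_le_of_nonneg_of_sum_le (le_max_right γ 0) hA0
    fun i => (hrow i).trans (le_max_left γ 0)).trans_lt (max_lt hγ one_pos)
  have hdet : IsUnit (1 - A).det :=
    (isUnit_iff_isUnit_det _).1 (isUnit_one_sub_of_norm_lt_one hA)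
  refine tendsto_relaxed_iteration_of_norm_lt_one hB hA hc hα0 hα1 hα ?_ hrec
  have hinv : (1 - A) * ((1 - A)⁻¹ * c) = c := by
    rw [← Matrix.mul_assoc, mul_nonsing_inv _ hdet, Matrix.one_mul]
  rw [Matrix.sub_mul, Matrix.one_mul] at hinv
  exact (sub_eq_iff_eq_add'.1 hinv).symm

end LinftyOp

end Matrix

theorem diland_consistent_converges_general {N m : ℕ}
    (Pk : ℕ → Matrix (Fin N) (Fin N) ℝ) (P : Matrix (Fin N) (Fin N) ℝ)
    (hPk : ∀ k i j, 0 ≤ Pk k i j)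
    (hPlim : Tendsto Pk atTop (nhds P))
    (γ : ℝ) (hrow : ∀ i, ∑ j, P i j ≤ γ) (hγ : γ < 1)
    (ck : ℕ → Matrix (Fin N) (Fin m) ℝ) (c : Matrix (Fin N) (Fin m) ℝ)
    (hclim : Tendsto ck atTop (nhds c))
    (α : ℕ → ℝ) (hα : ∀ k, α k ∈ Set.Ioc (0 : ℝ) 1)
    (hdiv : Tendsto (fun n => ∑ k ∈ Finset.range n, α k) atTop atTop)
    (x : ℕ → Matrix (Fin N) (Fin m) ℝ)
    (hrec : ∀ k, x (k + 1) = (1 - α k) • x k + α k • (Pk k * x k + ck k)) :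
    Tendsto x atTop (nhds (((1 : Matrix (Fin N) (Fin N) ℝ) - P)⁻¹ * c)) := by
  have hP : ∀ i j, 0 ≤ P i j := fun i j =>
    ge_of_tendsto (((continuous_apply_apply i j).tendsto P).comp hPlim)
      (Eventually.of_forall fun k => hPk k i j)
  exact Matrix.tendsto_relaxed_iteration_of_nonneg_of_sum_le hPlim hP hrow hγ hclim
    (fun k => (hα k).1.le) (fun k => (hα k).2) hdiv hrec

/-- DILAND with consistent estimates (Theorem 3 of the paper along a sample path):
if the nonnegative substochastic matrices `P_k` converge entrywise to `P` with
maximum row sum `γ < 1`, the vectors `c_k` converge to `c`, and the weights satisfy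
the persistence conditions `α_k ∈ (0,1]`, `∑ α_k = ∞`, then the iterates
`x_{k+1} = (1 - α_k) x_k + α_k (P_k x_k + c_k)` converge to `x* = (I - P)⁻¹ c` from
every initial condition. -/
theorem diland_consistent_converges {N m : ℕ}
    (Pk : ℕ → Matrix (Fin N) (Fin N) ℝ) (P : Matrix (Fin N) (Fin N) ℝ)
    (hPk : ∀ k i j, 0 ≤ Pk k i j) (hPkrow : ∀ k i, ∑ j, Pk k i j ≤ 1)
    (hPlim : Tendsto Pk atTop (nhds P))
    (γ : ℝ) (hrow : ∀ i, ∑ j, P i j ≤ γ) (hγ : γ < 1)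
    (ck : ℕ → Matrix (Fin N) (Fin m) ℝ) (c : Matrix (Fin N) (Fin m) ℝ)
    (hclim : Tendsto ck atTop (nhds c))
    (α : ℕ → ℝ) (hα : ∀ k, α k ∈ Set.Ioc (0 : ℝ) 1)
    (hdiv : Tendsto (fun n => ∑ k ∈ Finset.range n, α k) atTop atTop)
    (x : ℕ → Matrix (Fin N) (Fin m) ℝ)
    (hrec : ∀ k, x (k + 1) = (1 - α k) • x k + α k • (Pk k * x k + ck k)) :
    Tendsto x atTop (nhds (((1 : Matrix (Fin N) (Fin N) ℝ) - P)⁻¹ * c)) :=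
  diland_consistent_converges_general Pk P hPk hPlim γ hrow hγ ck c hclim α hα hdiv x hrec
end
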